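/- Let f : ℕ → ℝ be any function with f(N) → ∞ as N → ∞. Then there exists N₀ such that for all N ≥ N₀ and all integers i with f(N) ≤ i ≤ N−1, one has T_i((i + √i)/√(N − i + 3)) ≤ (i − 1 + √(i−1))/√(N − i + 4). -/

import Mathlib

/-!
Put `p = √i`, `a = i + √i`, `s = N - i + 3` and `t = a / √s`. Then
`T_i(t) = t (2i² + 1 - (t - 1)²) / (2i(i + 1))`, and `t √(s + 1) ≤ a + t² / (2a)` by concavity
of the square root. The quartic `(2a² + t²)(2i² + 1 - (t - 1)²)` is at most `4a²i² + 4a⁴ / D`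
with `D = 2a² - 2i² - 1 = 4p³ + 2p² - 1` for every `t`, so the bound is uniform in `N`.
Together with `√(i - 1) ≥ p - 1 / (2p - 1)` what remains is a polynomial inequality in `p`,
true for `p ≥ 10`; and `i ≥ f N ≥ 100` for `N` large.
-/

open Filter Real

/-- For an integer `i ≥ 1` and real `t`, `T_i(t) = (−t³ + 2t² + 2i²t)/(2i(i+1))`. -/
noncomputable def Tfun (i : ℕ) (t : ℝ) : ℝ :=
  (-t ^ 3 + 2 * t ^ 2 + 2 * (i : ℝ) ^ 2 * t) / (2 * (i : ℝ) * ((i : ℝ) + 1))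

lemma sqrt_add_one_le {s : ℝ} (hs : 0 < s) : √(s + 1) ≤ √s + 1 / (2 * √s) := by
  have hs' : 0 < √s := Real.sqrt_pos.2 hs
  rw [Real.sqrt_le_left (by positivity), add_sq, Real.sq_sqrt hs.le]
  field_simp
  nlinarith [sq_nonneg (1 / (2 * √s))]

lemma sub_one_div_le_sqrt_sq_sub_one {p : ℝ} (hp : 1 ≤ p) :
    p - 1 / (2 * p - 1) ≤ √(p ^ 2 - 1) := by
  set q := √(p ^ 2 - 1)
  have hq : q ^ 2 = p ^ 2 - 1 := Real.sq_sqrt (by nlinarith)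
  have hq1 : p - 1 ≤ q := (Real.le_sqrt (by linarith) (by nlinarith)).2 (by nlinarith)
  have hqp : q ≤ p := (Real.sqrt_le_left (by linarith)).2 (by linarith)
  rw [sub_le_comm, le_div_iff₀ (by linarith)]
  calc (p - q) * (2 * p - 1) ≤ (p - q) * (p + q) := by gcongr; linarith
    _ = 1 := by linear_combination -hq

lemma quartic_le_of_pos {a r t : ℝ} (hD : 0 < 2 * a ^ 2 - 2 * r ^ 2 - 1) :
    (2 * a ^ 2 + t ^ 2) * (2 * r ^ 2 + 1 - (t - 1) ^ 2) ≤
      4 * a ^ 2 * r ^ 2 + 4 * a ^ 4 / (2 * a ^ 2 - 2 * r ^ 2 - 1) := by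
  set D := 2 * a ^ 2 - 2 * r ^ 2 - 1
  have hsos : 4 * a ^ 2 * r ^ 2 + 4 * a ^ 4 / D -
      (2 * a ^ 2 + t ^ 2) * (2 * r ^ 2 + 1 - (t - 1) ^ 2) =
        D * (t - 2 * a ^ 2 / D) ^ 2 + t ^ 2 * (t - 1) ^ 2 := by
    field_simp
    ring
  rw [← sub_nonneg, hsos]
  exact add_nonneg (mul_nonneg hD.le (sq_nonneg _)) (by positivity)

lemma div_add_div_le_sub_one {p : ℝ} (hp : 10 ≤ p) :
    p * (p + 1) ^ 3 / (4 * p ^ 3 + 2 * p ^ 2 - 1) + (p ^ 2 + 1) / (2 * p - 1) ≤ p - 1 := by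
  have hD : 0 < 4 * p ^ 3 + 2 * p ^ 2 - 1 := by nlinarith
  rw [div_add_div _ _ hD.ne' (by linarith), div_le_iff₀ (mul_pos hD (by linarith))]
  nlinarith [mul_nonneg (pow_nonneg (show (0:ℝ) ≤ p by linarith) 3)
    (mul_nonneg (sub_nonneg.2 hp) (show (0:ℝ) ≤ 2 * p + 5 by linarith))]

lemma peak_le {p : ℝ} (hp : 10 ≤ p) :
    (p ^ 2 + p) * ((p ^ 2) ^ 2 + (p ^ 2 + p) ^ 2 / (2 * (p ^ 2 + p) ^ 2 - 2 * (p ^ 2) ^ 2 - 1)) ≤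
      p ^ 2 * (p ^ 2 + 1) * (p ^ 2 - 1 + √(p ^ 2 - 1)) := by
  have hD : 2 * (p ^ 2 + p) ^ 2 - 2 * (p ^ 2) ^ 2 - 1 = 4 * p ^ 3 + 2 * p ^ 2 - 1 := by ring
  have hD0 : 0 < 4 * p ^ 3 + 2 * p ^ 2 - 1 := by nlinarith
  rw [hD]
  calc (p ^ 2 + p) * ((p ^ 2) ^ 2 + (p ^ 2 + p) ^ 2 / (4 * p ^ 3 + 2 * p ^ 2 - 1))
      = p ^ 2 * (p ^ 4 + p ^ 3 + p * (p + 1) ^ 3 / (4 * p ^ 3 + 2 * p ^ 2 - 1)) := by ring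
    _ ≤ p ^ 2 * (p ^ 4 + p ^ 3 + p - 1 - (p ^ 2 + 1) / (2 * p - 1)) := by
      gcongr; linarith [div_add_div_le_sub_one hp]
    _ = p ^ 2 * (p ^ 2 + 1) * (p ^ 2 - 1 + (p - 1 / (2 * p - 1))) := by
      have : 2 * p - 1 ≠ 0 := by linarith
      field_simp; ring
    _ ≤ p ^ 2 * (p ^ 2 + 1) * (p ^ 2 - 1 + √(p ^ 2 - 1)) := by
      gcongr; exact sub_one_div_le_sqrt_sq_sub_one (by linarith)

lemma div_sqrt_mul_sqrt_add_one_mul_le {a r s : ℝ} (ha : 0 < a) (hs : 0 < s)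
    (hD : 0 < 2 * a ^ 2 - 2 * r ^ 2 - 1) :
    a / √s * √(s + 1) * (2 * r ^ 2 + 1 - (a / √s - 1) ^ 2) ≤
      2 * a * (r ^ 2 + a ^ 2 / (2 * a ^ 2 - 2 * r ^ 2 - 1)) := by
  have hs' : 0 < √s := Real.sqrt_pos.2 hs
  set t := a / √s with ht
  have ht0 : 0 ≤ t := by positivity
  rcases le_or_gt (2 * r ^ 2 + 1 - (t - 1) ^ 2) 0 with hX | hX
  · exact (mul_nonpos_of_nonneg_of_nonpos (by positivity) hX).trans (by positivity)
  have htw : t * √(s + 1) ≤ (2 * a ^ 2 + t ^ 2) / (2 * a) := by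
    calc t * √(s + 1) ≤ t * (√s + 1 / (2 * √s)) := by gcongr; exact sqrt_add_one_le hs
      _ = (2 * a ^ 2 + t ^ 2) / (2 * a) := by rw [ht]; field_simp
  calc t * √(s + 1) * (2 * r ^ 2 + 1 - (t - 1) ^ 2)
      ≤ (2 * a ^ 2 + t ^ 2) / (2 * a) * (2 * r ^ 2 + 1 - (t - 1) ^ 2) := by gcongr
    _ = (2 * a ^ 2 + t ^ 2) * (2 * r ^ 2 + 1 - (t - 1) ^ 2) / (2 * a) := by ring
    _ ≤ (4 * a ^ 2 * r ^ 2 + 4 * a ^ 4 / (2 * a ^ 2 - 2 * r ^ 2 - 1)) / (2 * a) := by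
      gcongr; exact quartic_le_of_pos hD
    _ = 2 * a * (r ^ 2 + a ^ 2 / (2 * a ^ 2 - 2 * r ^ 2 - 1)) := by
      field_simp; ring

lemma Tfun_div_sqrt_le {i : ℕ} (hi : 100 ≤ i) {s : ℝ} (hs : 0 < s) :
    Tfun i (((i : ℝ) + √i) / √s) ≤ ((i : ℝ) - 1 + √((i : ℝ) - 1)) / √(s + 1) := by
  have hp : 10 ≤ √(i : ℝ) := Real.le_sqrt_of_sq_le (by norm_num; exact_mod_cast hi)
  have hip : (i : ℝ) = √(i : ℝ) ^ 2 := (Real.sq_sqrt (Nat.cast_nonneg i)).symm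
  set p := √(i : ℝ)
  clear_value p
  rw [Tfun, hip]
  have hD : 0 < 2 * (p ^ 2 + p) ^ 2 - 2 * (p ^ 2) ^ 2 - 1 := by nlinarith
  rw [div_le_div_iff₀ (by positivity) (Real.sqrt_pos.2 (by linarith))]
  calc (-((p ^ 2 + p) / √s) ^ 3 + 2 * ((p ^ 2 + p) / √s) ^ 2
          + 2 * (p ^ 2) ^ 2 * ((p ^ 2 + p) / √s)) * √(s + 1)
      = (p ^ 2 + p) / √s * √(s + 1) * (2 * (p ^ 2) ^ 2 + 1 - ((p ^ 2 + p) / √s - 1) ^ 2) := by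
        ring
    _ ≤ 2 * (p ^ 2 + p) *
          ((p ^ 2) ^ 2 + (p ^ 2 + p) ^ 2 / (2 * (p ^ 2 + p) ^ 2 - 2 * (p ^ 2) ^ 2 - 1)) :=
        div_sqrt_mul_sqrt_add_one_mul_le (by positivity) hs hD
    _ ≤ 2 * (p ^ 2 * (p ^ 2 + 1) * (p ^ 2 - 1 + √(p ^ 2 - 1))) := by
        rw [mul_assoc]; exact mul_le_mul_of_nonneg_left (peak_le hp) two_pos.le
    _ = (p ^ 2 - 1 + √(p ^ 2 - 1)) * (2 * p ^ 2 * (p ^ 2 + 1)) := by ring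

/-- Induction-step inequality for the upper bound lemma. -/
theorem Tfun_induction_step (f : ℕ → ℝ) (hf : Tendsto f atTop atTop) :
    ∃ N₀ : ℕ, ∀ N : ℕ, N₀ ≤ N → ∀ i : ℕ,
      f N ≤ (i : ℝ) → (i : ℝ) ≤ (N : ℝ) - 1 →
      Tfun i (((i : ℝ) + Real.sqrt i) / Real.sqrt ((N : ℝ) - i + 3)) ≤
        ((i : ℝ) - 1 + Real.sqrt ((i : ℝ) - 1)) / Real.sqrt ((N : ℝ) - i + 4) := by
  obtain ⟨N₀, hN₀⟩ := eventually_atTop.1 (hf.eventually_ge_atTop 100)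
  refine ⟨N₀, fun N hN i hfi hiN => ?_⟩
  have hi : 100 ≤ i := by exact_mod_cast (hN₀ N hN).trans hfi
  rw [show (N : ℝ) - i + 4 = (N - i + 3) + 1 by ring]
  exact Tfun_div_sqrt_le hi (by linarith)
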